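/- arXiv:1911.05430 — 3 statements merged into one kernel-verified Lean document; each statement's English description precedes it below -/
import Mathlib

section
/- Let (X, ≤) be a quasi-order with decidable ≤ and define the multiset embedding: μ₁ ⊑ μ₂ iff there is an injection from the elements of μ₁ (with multiplicity) into those of μ₂ such that each element of μ₁ maps to a ≤-larger element of μ₂. If (X, ≤) is a well-quasi-order (every infinite sequence contains indices i < j with x_i ≤ x_j), then (Multiset X, ⊑) is a well-quasi-order. -/
/-!
By Higman's lemma, finite lists over a well-quasi-order are well-quasi-ordered by
`List.SublistForall₂`. Every multiset is the image of a list, and a list that embeds into a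
sublist of another list gives a multiset embedding of the images, so the quasi-order on
multisets is a surjective image of a well-quasi-order.
-/

/-- A well-quasi-order: every infinite sequence is good. -/
def IsWQO {X : Type*} (le : X → X → Prop) : Prop :=
  ∀ f : ℕ → X, ∃ i j : ℕ, i < j ∧ le (f i) (f j)

/-- Multiset embedding: `μ₁` embeds into `μ₂` iff `μ₁` is pointwise below
(via `le`) some submultiset of `μ₂`. -/
def MultisetEmb {X : Type*} (le : X → X → Prop) (μ₁ μ₂ : Multiset X) : Prop :=
  ∃ ν : Multiset X, ν ≤ μ₂ ∧ Multiset.Rel le μ₁ ν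

theorem List.Forall₂.rel_coe {α β : Type*} {r : α → β → Prop} {l₁ : List α} {l₂ : List β}
    (h : List.Forall₂ r l₁ l₂) : Multiset.Rel r (l₁ : Multiset α) (l₂ : Multiset β) := by
  induction h with
  | nil => exact .zero
  | cons hab _ ih => exact .cons hab ih

theorem WellQuasiOrdered.sublistForall₂ {α : Type*} {r : α → α → Prop} [IsPreorder α r]
    (h : WellQuasiOrdered r) : WellQuasiOrdered (List.SublistForall₂ r) :=
  Set.partiallyWellOrderedOn_univ_iff.1 <|
    ((Set.partiallyWellOrderedOn_univ_iff.2 h).partiallyWellOrderedOn_sublistForall₂ r).mono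
      fun _ _ x _ => Set.mem_univ x

theorem multisetEmb_coe_of_sublistForall₂ {X : Type*} {le : X → X → Prop} {l₁ l₂ : List X}
    (h : List.SublistForall₂ le l₁ l₂) : MultisetEmb le l₁ l₂ := by
  obtain ⟨l, hrel, hsub⟩ := List.sublistForall₂_iff.1 h
  exact ⟨l, Multiset.coe_le.2 hsub.subperm, hrel.rel_coe⟩

theorem multiset_wqo_general {X : Type*} (le : X → X → Prop)
    (hrefl : ∀ x, le x x)
    (htrans : ∀ x y z, le x y → le y z → le x z)
    (hwqo : IsWQO le) :
    IsWQO (MultisetEmb le) :=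
  letI : IsPreorder X le := { refl := hrefl, trans := htrans }
  let coeHom : List.SublistForall₂ le →r MultisetEmb le :=
    ⟨(↑), multisetEmb_coe_of_sublistForall₂⟩
  WellQuasiOrdered.of_surjective (WellQuasiOrdered.sublistForall₂ hwqo) coeHom
    Quot.mk_surjective

theorem multiset_wqo {X : Type*} (le : X → X → Prop) [DecidableRel le]
    (hrefl : ∀ x, le x x)
    (htrans : ∀ x y z, le x y → le y z → le x z)
    (hwqo : IsWQO le) :
    IsWQO (MultisetEmb le) :=
  multiset_wqo_general le hrefl htrans hwqo
end

section
/- Define forests of height at most k over a finite label set B by F₀ = Multiset B and F_{k+1} = Multiset (B ⊕ F_k), with embedding order given at each level by the multiset extension of (equality on B at leaves, disjoint-sum of equality on B and the forest embedding on F_k). Then for every k, the forest embedding on F_k is a well-quasi-order. -/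
/-- Forests of height at most `k` over labels `B`. -/
def Forest (B : Type) : ℕ → Type
  | 0 => Multiset B
  | k + 1 => Multiset (B ⊕ Forest B k)

/-- The forest embedding order. -/
def ForestLe (B : Type) : ∀ k, Forest B k → Forest B k → Prop
  | 0 => MultisetEmb (Eq : B → B → Prop)
  | k + 1 => MultisetEmb (Sum.LiftRel (Eq : B → B → Prop) (ForestLe B k))

/-!
By induction on the height: equality on the finite label set is a wqo, disjoint sums of wqos
are wqos, and the multiset embedding over a wqo is a wqo. The last fact is Higman's lemma
pushed along the surjection from lists to multisets, since a sublist-embedding of lists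
induces a multiset embedding of the underlying multisets.
-/

variable {α β : Type*} {r : α → α → Prop} {s : β → β → Prop}

theorem Multiset.Rel.exists_le_of_le_left {a b a' : Multiset α} (h : Multiset.Rel r a b)
    (ha : a' ≤ a) : ∃ b' ≤ b, Multiset.Rel r a' b' := by
  obtain ⟨c, rfl⟩ := Multiset.le_iff_exists_add.mp ha
  obtain ⟨b₀, b₁, h₀, -, rfl⟩ := Multiset.rel_add_left.mp h
  exact ⟨b₀, Multiset.le_add_right _ _, h₀⟩

theorem List.Forall₂.multiset_rel_coe :
    ∀ {l₁ l₂ : List α}, List.Forall₂ r l₁ l₂ → Multiset.Rel r l₁ l₂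
  | _, _, .nil => .zero
  | _, _, .cons h t => .cons h t.multiset_rel_coe

theorem List.SublistForall₂.multisetEmb_coe {l₁ l₂ : List α} (h : List.SublistForall₂ r l₁ l₂) :
    MultisetEmb r l₁ l₂ := by
  obtain ⟨l, hrel, hsub⟩ := List.sublistForall₂_iff.mp h
  exact ⟨l, Multiset.coe_le.mpr hsub.subperm, hrel.multiset_rel_coe⟩

instance MultisetEmb.isPreorder [IsPreorder α r] : IsPreorder (Multiset α) (MultisetEmb r) where
  refl μ := ⟨μ, le_rfl, Multiset.rel_refl_of_refl_on fun x _ => refl x⟩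
  trans _ _ _ := by
    rintro ⟨ν₁, hν₁, hrel₁⟩ ⟨ν₂, hν₂, hrel₂⟩
    obtain ⟨ν, hν, hrel⟩ := hrel₂.exists_le_of_le_left hν₁
    exact ⟨ν, hν.trans hν₂, hrel₁.trans r hrel⟩

instance Sum.LiftRel.isPreorder [IsPreorder α r] [IsPreorder β s] :
    IsPreorder (α ⊕ β) (Sum.LiftRel r s) where

theorem WellQuasiOrdered.multisetEmb [IsPreorder α r] (h : WellQuasiOrdered r) :
    WellQuasiOrdered (MultisetEmb r) := by
  have higman : WellQuasiOrdered (List.SublistForall₂ r) := by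
    have := (Set.partiallyWellOrderedOn_univ_iff.mpr h).partiallyWellOrderedOn_sublistForall₂ r
    simpa only [Set.mem_univ, imp_true_iff, Set.ofPred_true,
      Set.partiallyWellOrderedOn_univ_iff] using this
  exact higman.of_surjective ⟨Multiset.ofList, List.SublistForall₂.multisetEmb_coe⟩
    Quot.mk_surjective

theorem WellQuasiOrdered.sum_liftRel (hr : WellQuasiOrdered r) (hs : WellQuasiOrdered s) :
    WellQuasiOrdered (Sum.LiftRel r s) := by
  rw [← Set.partiallyWellOrderedOn_univ_iff, ← Set.range_inl_union_range_inr,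
    ← Set.image_univ, ← Set.image_univ]
  exact ((Set.partiallyWellOrderedOn_univ_iff.mpr hr).image_of_monotone_on
      fun _ _ _ _ => .inl).union
    ((Set.partiallyWellOrderedOn_univ_iff.mpr hs).image_of_monotone_on fun _ _ _ _ => .inr)

instance ForestLe.isPreorder (B : Type) : ∀ k, IsPreorder (Forest B k) (ForestLe B k)
  | 0 => MultisetEmb.isPreorder (r := (Eq : B → B → Prop))
  | k + 1 =>
    have := ForestLe.isPreorder B k
    MultisetEmb.isPreorder (r := Sum.LiftRel (Eq : B → B → Prop) (ForestLe B k))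

theorem forest_wqo (B : Type) [Fintype B] (k : ℕ) : IsWQO (ForestLe B k) := by
  have hB : WellQuasiOrdered (Eq : B → B → Prop) := Finite.wellQuasiOrdered _
  induction k with
  | zero => exact hB.multisetEmb
  | succ k ih => exact (hB.sum_liftRel ih).multisetEmb
end

section
/- In a well-quasi-order, every nonempty downward-closed set is a finite union of ideals. -/
/-- A set is downward closed w.r.t. the order. -/
def DownClosed {X : Type*} [Preorder X] (D : Set X) : Prop :=
  ∀ ⦃x y : X⦄, x ≤ y → y ∈ D → x ∈ D

/-- An ideal: a nonempty, downward-closed, directed set. -/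
def IsIdeal {X : Type*} [Preorder X] (I : Set X) : Prop :=
  I.Nonempty ∧ DownClosed I ∧ DirectedOn (· ≤ ·) I

lemma wqo_wf_downsets {X : Type*} [Preorder X]
    (hwqo : IsWQO ((· ≤ ·) : X → X → Prop)) :
    WellFounded (fun A B : Set X => DownClosed A ∧ A ⊂ B) := by
  haveI : IsIrrefl (Set X) (fun A B : Set X => DownClosed A ∧ A ⊂ B) :=
    ⟨fun A h => (ssubset_irrefl A) h.2⟩
  haveI : IsTrans (Set X) (fun A B : Set X => DownClosed A ∧ A ⊂ B) :=
    ⟨fun _ _ _ hab hbc => ⟨hab.1, hab.2.trans hbc.2⟩⟩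
  haveI : IsStrictOrder (Set X) (fun A B : Set X => DownClosed A ∧ A ⊂ B) := { }
  rw [RelEmbedding.wellFounded_iff_isEmpty]
  constructor
  intro f
  have hstep : ∀ n : ℕ, DownClosed (f (n + 1)) ∧ f (n + 1) ⊂ f n := by
    intro n
    exact f.map_rel_iff.mpr (Nat.lt_succ_self n)
  have hx : ∀ n : ℕ, ∃ x, x ∈ f n ∧ x ∉ f (n + 1) := by
    intro n
    obtain ⟨x, hx1, hx2⟩ := Set.exists_of_ssubset (hstep n).2
    exact ⟨x, hx1, hx2⟩
  choose x hx1 hx2 using hx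
  have hmono : ∀ i j : ℕ, i ≤ j → f j ⊆ f i := by
    intro i j hij
    induction j with
    | zero => simp_all
    | succ k ih =>
      rcases Nat.le_succ_iff.mp hij with h | h
      · exact ((hstep k).2.1).trans (ih h)
      · subst h; rfl
  obtain ⟨i, j, hij, hle⟩ := hwqo x
  have hxj : x j ∈ f (i + 1) := hmono (i + 1) j hij (hx1 j)
  exact hx2 i ((hstep i).1 hle hxj)

theorem downclosed_eq_finite_union_ideals {X : Type*} [Preorder X]
    (hwqo : IsWQO ((· ≤ ·) : X → X → Prop))
    (D : Set X) (hD : DownClosed D) (hne : D.Nonempty) :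
    ∃ (n : ℕ) (I : Fin n → Set X),
      (∀ i, IsIdeal (I i)) ∧ D = ⋃ i, I i := by
  have key : ∀ D : Set X, DownClosed D → D.Nonempty →
      ∃ T : Finset (Set X), (∀ I ∈ T, IsIdeal I) ∧ D = ⋃ I ∈ T, (I : Set X) := by
    classical
    intro D
    induction D using (wqo_wf_downsets hwqo).induction with
    | _ D ih =>
    intro hD hne
    by_cases hdir : DirectedOn (· ≤ ·) D
    · refine ⟨{D}, ?_, by simp⟩
      intro I hI
      simp only [Finset.mem_singleton] at hI
      subst hI
      exact ⟨hne, hD, hdir⟩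
    · simp only [DirectedOn, not_forall, not_exists] at hdir
      obtain ⟨a, ha, b, hb, hab⟩ := hdir
      set D1 : Set X := {x ∈ D | ¬ a ≤ x} with hD1def
      set D2 : Set X := {x ∈ D | ¬ b ≤ x} with hD2def
      have hD1down : DownClosed D1 := by
        intro x y hxy hy
        exact ⟨hD hxy hy.1, fun hax => hy.2 (hax.trans hxy)⟩
      have hD2down : DownClosed D2 := by
        intro x y hxy hy
        exact ⟨hD hxy hy.1, fun hbx => hy.2 (hbx.trans hxy)⟩
      have hbD1 : b ∈ D1 := ⟨hb, fun hab' => hab b ⟨hb, hab', le_refl b⟩⟩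
      have haD2 : a ∈ D2 := ⟨ha, fun hba => hab a ⟨ha, le_refl a, hba⟩⟩
      have hD1ss : D1 ⊂ D := by
        constructor
        · intro x hx; exact hx.1
        · intro hsub
          exact (hsub ha).2 (le_refl a)
      have hD2ss : D2 ⊂ D := by
        constructor
        · intro x hx; exact hx.1
        · intro hsub
          exact (hsub hb).2 (le_refl b)
      obtain ⟨T1, hT1i, hT1u⟩ := ih D1 ⟨hD1down, hD1ss⟩ hD1down ⟨b, hbD1⟩
      obtain ⟨T2, hT2i, hT2u⟩ := ih D2 ⟨hD2down, hD2ss⟩ hD2down ⟨a, haD2⟩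
      refine ⟨T1 ∪ T2, ?_, ?_⟩
      · intro I hI
        rcases Finset.mem_union.mp hI with h | h
        · exact hT1i I h
        · exact hT2i I h
      · have hDunion : D = D1 ∪ D2 := by
          ext x
          constructor
          · intro hx
            by_cases hax : a ≤ x
            · right
              exact ⟨hx, fun hbx => hab x ⟨hx, hax, hbx⟩⟩
            · left; exact ⟨hx, hax⟩
          · rintro (hx | hx) <;> exact hx.1
        rw [hDunion, hT1u, hT2u, Finset.set_biUnion_union]
  obtain ⟨T, hTi, hTu⟩ := key D hD hne
  refine ⟨T.card, fun i => (T.equivFin.symm i : Set X), ?_, ?_⟩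
  · intro i
    exact hTi _ (T.equivFin.symm i).2
  · rw [hTu]
    ext x
    simp only [Set.mem_iUnion, exists_prop]
    constructor
    · rintro ⟨I, hI, hx⟩
      exact ⟨T.equivFin ⟨I, hI⟩, by simpa using hx⟩
    · rintro ⟨i, hx⟩
      exact ⟨_, (T.equivFin.symm i).2, hx⟩
end
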